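/- arXiv:1801.03404 — 5 statements merged into one kernel-verified Lean document; each statement's English description precedes it below -/
import Mathlib

section
/- Let h(x) = -(x-1)·ln(x/n) for real x with 1 ≤ x ≤ n (n ≥ 1 a real number). Then the maximum of h on [1, n] is at most n + 1/n - 2. Consequently h(x)/(n-1) ≤ 1 for all x in [1,n] when n > 1. -/
theorem h_max_bound (n : ℝ) (hn : 1 ≤ n) :
    (∀ x : ℝ, 1 ≤ x → x ≤ n → -(x - 1) * Real.log (x / n) ≤ n + 1 / n - 2) ∧
    (1 < n → ∀ x : ℝ, 1 ≤ x → x ≤ n → -(x - 1) * Real.log (x / n) / (n - 1) ≤ 1) := by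
  have hn0 : (0:ℝ) < n := lt_of_lt_of_le one_pos hn
  have main : ∀ x : ℝ, 1 ≤ x → x ≤ n → -(x - 1) * Real.log (x / n) ≤ n + 1 / n - 2 := by
    intro x hx1 hxn
    have hx0 : (0:ℝ) < x := lt_of_lt_of_le one_pos hx1
    have hlog : Real.log (n / x) ≤ n / x - 1 :=
      Real.log_le_sub_one_of_pos (div_pos hn0 hx0)
    have heq : Real.log (x / n) = -Real.log (n / x) := by
      rw [← Real.log_inv, inv_div]
    have h1 : -(x - 1) * Real.log (x / n) = (x - 1) * Real.log (n / x) := by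
      rw [heq]; ring
    have h2 : (x - 1) * Real.log (n / x) ≤ (x - 1) * (n / x - 1) := by
      apply mul_le_mul_of_nonneg_left hlog (by linarith)
    have h3 : (x - 1) * (n / x - 1) ≤ n + 1 / n - 2 := by
      have e1 : n / x - 1 = (n - x) / x := by field_simp
      have e2 : n + 1 / n - 2 = (n - 1) ^ 2 / n := by field_simp; ring
      rw [e1, e2, mul_div_assoc', div_le_div_iff₀ hx0 hn0]
      nlinarith [mul_nonneg hn0.le (sq_nonneg (x - 1)),
        mul_nonneg (sub_nonneg.2 hxn) (sub_nonneg.2 hn)]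
    linarith [h1 ▸ h2.trans h3]
  refine ⟨main, fun hn1 x hx1 hxn => ?_⟩
  have hpos : (0:ℝ) < n - 1 := by linarith
  rw [div_le_one hpos]
  have := main x hx1 hxn
  have hinv : 1 / n ≤ 1 := by
    rw [div_le_one hn0]; exact hn
  linarith
end

section
/- Let G be the complete graph on n vertices (n ≥ 2), and let P = {V_1, ..., V_L} be any partition of the vertex set with |V_j| = n_j. Then the resistance of G by P, defined as R^P(G) = -∑_{j=1}^L ((n_j - 1) n_j / ((n-1) n)) · log₂(n_j / n), satisfies R^P(G) < log₂ e + o(1); more precisely, if n is divisible by each module size and all modules have equal size x, then R^P(G) = -(x-1)·log₂(x/n)·(1/(n-1)) ≤ (n + 1/n - 2)/((ln 2)·(n-1)) < log₂ e. -/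
theorem complete_graph_uniform_partition_resistance (n x : ℕ) (hn : 2 ≤ n)
    (hx : 1 ≤ x) (hxn : x ∣ n) :
    (-∑ _j ∈ Finset.range (n / x),
        (((x : ℝ) - 1) * x / (((n : ℝ) - 1) * n)) * Real.logb 2 ((x : ℝ) / n))
      = -(((x : ℝ) - 1) * Real.logb 2 ((x : ℝ) / n)) / ((n : ℝ) - 1) ∧
    (-∑ _j ∈ Finset.range (n / x),
        (((x : ℝ) - 1) * x / (((n : ℝ) - 1) * n)) * Real.logb 2 ((x : ℝ) / n))
      ≤ ((n : ℝ) + 1 / n - 2) / (Real.log 2 * ((n : ℝ) - 1)) ∧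
    ((n : ℝ) + 1 / n - 2) / (Real.log 2 * ((n : ℝ) - 1)) < Real.logb 2 (Real.exp 1) := by
  have hx0 : (0:ℝ) < (x:ℝ) := by exact_mod_cast hx
  have hn0 : (0:ℝ) < (n:ℝ) := by positivity
  have hn1 : (1:ℝ) < (n:ℝ) := by exact_mod_cast hn
  have hn1' : (0:ℝ) < (n:ℝ) - 1 := by linarith
  have hlog2 : (0:ℝ) < Real.log 2 := Real.log_pos (by norm_num)
  have hxle : (x:ℝ) ≤ (n:ℝ) := by
    exact_mod_cast Nat.le_of_dvd (by omega) hxn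
  have hcast : ((n / x : ℕ) : ℝ) = (n:ℝ) / (x:ℝ) := by
    rw [Nat.cast_div hxn (by positivity)]
  have hsum : (-∑ _j ∈ Finset.range (n / x),
        (((x : ℝ) - 1) * x / (((n : ℝ) - 1) * n)) * Real.logb 2 ((x : ℝ) / n))
      = -(((x : ℝ) - 1) * Real.logb 2 ((x : ℝ) / n)) / ((n : ℝ) - 1) := by
    rw [Finset.sum_const, Finset.card_range, nsmul_eq_mul, hcast]
    field_simp
  refine ⟨hsum, ?_, ?_⟩
  · rw [hsum]
    have hlogb : Real.logb 2 ((x:ℝ)/n) = Real.log ((x:ℝ)/n) / Real.log 2 := rfl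
    have hneg : -Real.log ((x:ℝ)/n) = Real.log ((n:ℝ)/x) := by
      rw [← Real.log_inv]; congr 1; field_simp
    have hle : Real.log ((n:ℝ)/x) ≤ (n:ℝ)/x - 1 :=
      Real.log_le_sub_one_of_pos (by positivity)
    have hx1' : (0:ℝ) ≤ (x:ℝ) - 1 := by
      have : (1:ℝ) ≤ (x:ℝ) := by exact_mod_cast hx
      linarith
    have key : ((x:ℝ) - 1) * Real.log ((n:ℝ)/x) ≤ (n:ℝ) + 1/n - 2 := by
      have h1 : ((x:ℝ) - 1) * Real.log ((n:ℝ)/x) ≤ ((x:ℝ) - 1) * ((n:ℝ)/x - 1) :=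
        mul_le_mul_of_nonneg_left hle hx1'
      have h2 : ((x:ℝ) - 1) * ((n:ℝ)/x - 1) ≤ (n:ℝ) + 1/n - 2 := by
        rw [div_sub_one (ne_of_gt hx0)]
        rw [mul_div_assoc', div_le_iff₀ hx0]
        have hexp : ((n:ℝ) + 1/n - 2) = ((n:ℝ)-1)^2 / n := by field_simp; ring
        rw [hexp, div_mul_eq_mul_div, le_div_iff₀ hn0]
        nlinarith [sq_nonneg (2*(n:ℝ)*x - 3*n + 1), mul_nonneg (mul_nonneg (sq_nonneg ((n:ℝ)-1)) (le_of_lt hn1')) (by linarith : (0:ℝ) ≤ 4*(n:ℝ)-1), sq_nonneg ((n:ℝ)-1), mul_pos hn0 hx0]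
      linarith
    rw [hlogb, div_le_div_iff₀ (by positivity) (by positivity)]
    have : -(((x:ℝ) - 1) * (Real.log ((x:ℝ)/n) / Real.log 2))
        = ((x:ℝ) - 1) * Real.log ((n:ℝ)/x) / Real.log 2 := by
      rw [← hneg]; ring
    rw [this]
    rw [div_mul_eq_mul_div, div_le_iff₀ hlog2]
    calc ((x:ℝ) - 1) * Real.log ((n:ℝ)/x) * (Real.log 2 * ((n:ℝ)-1))
        = (((x:ℝ) - 1) * Real.log ((n:ℝ)/x)) * ((n:ℝ)-1) * Real.log 2 := by ring
      _ ≤ (((n:ℝ) + 1/n - 2) * ((n:ℝ)-1)) * Real.log 2 := by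
          apply mul_le_mul_of_nonneg_right _ (le_of_lt hlog2)
          exact mul_le_mul_of_nonneg_right key (le_of_lt hn1')
      _ = ((n:ℝ) + 1/n - 2) * ((n:ℝ)-1) * Real.log 2 := by ring
  · rw [Real.logb, Real.log_exp]
    rw [div_lt_div_iff₀ (by positivity) hlog2]
    have h : ((n:ℝ) + 1/n - 2) < (n:ℝ) - 1 := by
      have : 1/(n:ℝ) < 1 := by
        rw [div_lt_one hn0]; linarith
      linarith
    nlinarith
end

section
/- Let T be the complete binary tree of depth H ≥ 2 viewed as a graph on n = 2^H - 1 vertices (root has degree 2, internal vertices degree 3, leaves degree 1; total volume 2^{H+1} - 4). Then the one-dimensional structure entropy H¹(T) = -∑_v (d_v / (2^{H+1}-4)) log₂(d_v / (2^{H+1}-4)) satisfies H¹(T) ≥ H - 1, and hence H¹(T) ≥ log₂ n - 1. -/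
theorem binary_tree_one_dim_entropy (H : ℕ) (hH : 2 ≤ H) :
    (-((2 / ((2 : ℝ) ^ (H + 1) - 4)) * Real.logb 2 (2 / ((2 : ℝ) ^ (H + 1) - 4))
        + (2 : ℝ) ^ (H - 1) *
            ((1 / ((2 : ℝ) ^ (H + 1) - 4)) * Real.logb 2 (1 / ((2 : ℝ) ^ (H + 1) - 4)))
        + ((2 : ℝ) ^ (H - 1) - 2) *
            ((3 / ((2 : ℝ) ^ (H + 1) - 4)) * Real.logb 2 (3 / ((2 : ℝ) ^ (H + 1) - 4)))))
      ≥ (H : ℝ) - 1 ∧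
    (-((2 / ((2 : ℝ) ^ (H + 1) - 4)) * Real.logb 2 (2 / ((2 : ℝ) ^ (H + 1) - 4))
        + (2 : ℝ) ^ (H - 1) *
            ((1 / ((2 : ℝ) ^ (H + 1) - 4)) * Real.logb 2 (1 / ((2 : ℝ) ^ (H + 1) - 4)))
        + ((2 : ℝ) ^ (H - 1) - 2) *
            ((3 / ((2 : ℝ) ^ (H + 1) - 4)) * Real.logb 2 (3 / ((2 : ℝ) ^ (H + 1) - 4)))))
      ≥ Real.logb 2 ((2 : ℝ) ^ H - 1) - 1 := by
  -- bounds on log₂ 3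
  have l3lb : (19:ℝ)/12 ≤ Real.logb 2 3 := by
    rw [Real.logb, le_div_iff₀ (Real.log_pos (by norm_num))]
    have h : Real.log ((2:ℝ)^(19:ℕ)) ≤ Real.log ((3:ℝ)^(12:ℕ)) :=
      Real.log_le_log (by positivity) (by norm_num)
    rw [Real.log_pow, Real.log_pow] at h; push_cast at h; linarith
  have l3ub : Real.logb 2 3 ≤ (8:ℝ)/5 := by
    rw [Real.logb, div_le_iff₀ (Real.log_pos (by norm_num))]
    have h : Real.log ((3:ℝ)^(5:ℕ)) ≤ Real.log ((2:ℝ)^(8:ℕ)) :=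
      Real.log_le_log (by positivity) (by norm_num)
    rw [Real.log_pow, Real.log_pow] at h; push_cast at h; linarith
  set x : ℝ := (2:ℝ)^H with hxdef
  have hx4 : (4:ℝ) ≤ x := by
    have h := pow_le_pow_right₀ (a := (2:ℝ)) (by norm_num) hH
    norm_num at h; rw [hxdef]; exact h
  have h1 : (2:ℝ)^(H+1) = 2*x := by rw [pow_succ]; ring
  have h2 : (2:ℝ)^(H-1) = x/2 := by
    have : (2:ℝ)^(H-1) * 2 = x := by
      rw [hxdef, ← pow_succ, Nat.sub_add_cancel (by omega)]
    linarith
  have hM : (0:ℝ) < 2*x - 4 := by linarith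
  have hMne : (2*x - 4) ≠ 0 := ne_of_gt hM
  have hlogx : Real.logb 2 x = H := by
    rw [hxdef, Real.logb_pow, Real.logb_self_eq_one (by norm_num)]; ring
  have e2 : Real.logb 2 (2 / (2*x - 4)) = 1 - Real.logb 2 (2*x-4) := by
    rw [Real.logb_div (by norm_num) hMne, Real.logb_self_eq_one (by norm_num)]
  have e1 : Real.logb 2 (1 / (2*x - 4)) = - Real.logb 2 (2*x-4) := by
    rw [Real.logb_div (by norm_num) hMne, Real.logb_one]; ring
  have e3 : Real.logb 2 (3 / (2*x - 4)) = Real.logb 2 3 - Real.logb 2 (2*x-4) := by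
    rw [Real.logb_div (by norm_num) hMne]
  rw [h1, h2, e1, e2, e3]
  set L : ℝ := Real.logb 2 (2*x-4) with hLdef
  set L3 : ℝ := Real.logb 2 3 with hL3def
  have key : -((2 / (2*x - 4)) * (1 - L) + x/2 * ((1 / (2*x - 4)) * (-L))
      + (x/2 - 2) * ((3 / (2*x - 4)) * (L3 - L)))
      = L - 2/(2*x-4) - (3*(x/2-2)/(2*x-4)) * L3 := by
    field_simp; ring
  rw [key]
  have hlog2 : Real.logb 2 (x - 1) ≤ (H:ℝ) := by
    calc Real.logb 2 (x - 1) ≤ Real.logb 2 x :=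
          Real.logb_le_logb_of_le (by norm_num) (by linarith) (by linarith)
      _ = H := hlogx
  have main : L - 2/(2*x-4) - (3*(x/2-2)/(2*x-4)) * L3 ≥ (H:ℝ) - 1 := by
    rcases eq_or_lt_of_le hH with hH2 | hH3
    · -- H = 2, x = 4
      have hx : x = 4 := by rw [hxdef, ← hH2]; norm_num
      have hL : L = 2 := by
        rw [hLdef, hx, show (2:ℝ)*4 - 4 = 2^(2:ℕ) by norm_num,
          Real.logb_pow, Real.logb_self_eq_one (by norm_num)]; ring
      have hHr : (H:ℝ) = 2 := by rw [← hH2]; norm_num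
      rw [hx, hL, hHr]; norm_num
    · -- H ≥ 3, x ≥ 8
      have hx8 : (8:ℝ) ≤ x := by
        have h := pow_le_pow_right₀ (a := (2:ℝ)) (by norm_num) hH3
        norm_num at h; rw [hxdef]; exact h
      have hLlb : (L3 - 1) + H ≤ L := by
        have h32 : Real.logb 2 (3/2 * x) ≤ L := by
          rw [hLdef]
          exact Real.logb_le_logb_of_le (by norm_num) (by linarith) (by linarith)
        have : Real.logb 2 (3/2 * x) = (L3 - 1) + H := by
          rw [Real.logb_mul (by norm_num) (by positivity), hlogx,
            Real.logb_div (by norm_num) (by norm_num),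
            Real.logb_self_eq_one (by norm_num), ← hL3def]
        linarith
      have hfrac : 2/(2*x-4) ≤ 1/6 := by
        rw [div_le_div_iff₀ hM (by norm_num)]; linarith
      have hc : (3*(x/2-2)/(2*x-4)) * L3 ≤ 6/5 := by
        have hcle : 3*(x/2-2)/(2*x-4) ≤ 3/4 := by
          rw [div_le_div_iff₀ hM (by norm_num)]; linarith
        have hL3nn : (0:ℝ) ≤ L3 := by linarith
        calc (3*(x/2-2)/(2*x-4)) * L3 ≤ (3/4) * L3 :=
              mul_le_mul_of_nonneg_right hcle hL3nn
          _ ≤ 6/5 := by linarith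
      linarith
  exact ⟨main, by linarith⟩
end

section
/- Let G be the n×n grid graph (n ≥ 2). Its one-dimensional structure entropy satisfies H¹(G) = log₂(n(n-1)) + (3(n-2)(2 - log₂ 3) + 2)/(n(n-1)) ≥ log₂(n(n-1)). -/
theorem grid_one_dim_entropy (n : ℕ) (hn : 2 ≤ n) :
    (-(4 * ((2 / (4 * (n : ℝ) * ((n : ℝ) - 1))) *
            Real.logb 2 (2 / (4 * (n : ℝ) * ((n : ℝ) - 1))))
        + 4 * ((n : ℝ) - 2) * ((3 / (4 * (n : ℝ) * ((n : ℝ) - 1))) *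
            Real.logb 2 (3 / (4 * (n : ℝ) * ((n : ℝ) - 1))))
        + ((n : ℝ) - 2) ^ 2 * ((4 / (4 * (n : ℝ) * ((n : ℝ) - 1))) *
            Real.logb 2 (4 / (4 * (n : ℝ) * ((n : ℝ) - 1))))))
      = Real.logb 2 ((n : ℝ) * ((n : ℝ) - 1))
        + (3 * ((n : ℝ) - 2) * (2 - Real.logb 2 3) + 2) / ((n : ℝ) * ((n : ℝ) - 1)) ∧
    (-(4 * ((2 / (4 * (n : ℝ) * ((n : ℝ) - 1))) *
            Real.logb 2 (2 / (4 * (n : ℝ) * ((n : ℝ) - 1))))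
        + 4 * ((n : ℝ) - 2) * ((3 / (4 * (n : ℝ) * ((n : ℝ) - 1))) *
            Real.logb 2 (3 / (4 * (n : ℝ) * ((n : ℝ) - 1))))
        + ((n : ℝ) - 2) ^ 2 * ((4 / (4 * (n : ℝ) * ((n : ℝ) - 1))) *
            Real.logb 2 (4 / (4 * (n : ℝ) * ((n : ℝ) - 1))))))
      ≥ Real.logb 2 ((n : ℝ) * ((n : ℝ) - 1)) := by
  have hx : (2:ℝ) ≤ (n:ℝ) := by exact_mod_cast hn
  have hx0 : (0:ℝ) < (n:ℝ) := by linarith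
  have hx1 : (0:ℝ) < (n:ℝ) - 1 := by linarith
  have hM : (0:ℝ) < (n:ℝ) * ((n:ℝ) - 1) := by positivity
  have hN : (0:ℝ) < 4 * (n:ℝ) * ((n:ℝ) - 1) := by positivity
  have hlog4 : Real.logb 2 4 = 2 := by
    rw [show (4:ℝ) = 2 ^ (2:ℕ) by norm_num, Real.logb_pow,
      Real.logb_self_eq_one (by norm_num)]
    norm_num
  have hlogN : Real.logb 2 (4 * (n:ℝ) * ((n:ℝ) - 1))
      = 2 + Real.logb 2 ((n:ℝ) * ((n:ℝ) - 1)) := by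
    rw [show 4 * (n:ℝ) * ((n:ℝ) - 1) = 4 * ((n:ℝ) * ((n:ℝ) - 1)) by ring,
      Real.logb_mul (by norm_num) (ne_of_gt hM), hlog4]
  have h2 : Real.logb 2 (2 / (4 * (n:ℝ) * ((n:ℝ) - 1)))
      = 1 - (2 + Real.logb 2 ((n:ℝ) * ((n:ℝ) - 1))) := by
    rw [Real.logb_div (by norm_num) (ne_of_gt hN), hlogN,
      Real.logb_self_eq_one (by norm_num)]
  have h3 : Real.logb 2 (3 / (4 * (n:ℝ) * ((n:ℝ) - 1)))
      = Real.logb 2 3 - (2 + Real.logb 2 ((n:ℝ) * ((n:ℝ) - 1))) := by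
    rw [Real.logb_div (by norm_num) (ne_of_gt hN), hlogN]
  have h4 : Real.logb 2 (4 / (4 * (n:ℝ) * ((n:ℝ) - 1)))
      = 2 - (2 + Real.logb 2 ((n:ℝ) * ((n:ℝ) - 1))) := by
    rw [Real.logb_div (by norm_num) (ne_of_gt hN), hlogN, hlog4]
  have ha : Real.logb 2 3 ≤ 2 := by
    calc Real.logb 2 3 ≤ Real.logb 2 4 :=
          Real.logb_le_logb_of_le (by norm_num) (by norm_num) (by norm_num)
      _ = 2 := hlog4
  have heq : (-(4 * ((2 / (4 * (n : ℝ) * ((n : ℝ) - 1))) *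
            Real.logb 2 (2 / (4 * (n : ℝ) * ((n : ℝ) - 1))))
        + 4 * ((n : ℝ) - 2) * ((3 / (4 * (n : ℝ) * ((n : ℝ) - 1))) *
            Real.logb 2 (3 / (4 * (n : ℝ) * ((n : ℝ) - 1))))
        + ((n : ℝ) - 2) ^ 2 * ((4 / (4 * (n : ℝ) * ((n : ℝ) - 1))) *
            Real.logb 2 (4 / (4 * (n : ℝ) * ((n : ℝ) - 1))))))
      = Real.logb 2 ((n : ℝ) * ((n : ℝ) - 1))
        + (3 * ((n : ℝ) - 2) * (2 - Real.logb 2 3) + 2) / ((n : ℝ) * ((n : ℝ) - 1)) := by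
    rw [h2, h3, h4]
    field_simp
    ring
  refine ⟨heq, ?_⟩
  rw [heq]
  have hnum : 0 ≤ 3 * ((n:ℝ) - 2) * (2 - Real.logb 2 3) + 2 := by nlinarith
  have := div_nonneg hnum (le_of_lt hM)
  linarith
end

section
/- Let G be a connected simple graph with m edges and degree sequence d_1,...,d_n, 2m = ∑ d_i. Then the one-dimensional structure entropy H¹(G) = -∑_i (d_i/2m) log₂(d_i/2m) satisfies H¹(G) ≥ (1/2)(log₂ m - 1). -/
open Finset

private lemma adjPairSum {n : ℕ} (G : SimpleGraph (Fin n)) [DecidableRel G.Adj]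
    {M : Type*} [AddCommMonoid M] (f : Fin n → Fin n → M) :
    ∑ p ∈ Finset.univ.filter (fun p : Fin n × Fin n => G.Adj p.1 p.2), f p.1 p.2
      = ∑ a, ∑ b ∈ G.neighborFinset a, f a b := by
  rw [Finset.sum_filter, Fintype.sum_prod_type]
  refine Finset.sum_congr rfl fun a _ => ?_
  rw [SimpleGraph.neighborFinset_eq_filter, Finset.sum_filter]

private lemma adjPairSwap {n : ℕ} (G : SimpleGraph (Fin n)) [DecidableRel G.Adj]
    (f : Fin n → Fin n → ℝ) :
    ∑ p ∈ Finset.univ.filter (fun p : Fin n × Fin n => G.Adj p.1 p.2), f p.2 p.1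
      = ∑ p ∈ Finset.univ.filter (fun p : Fin n × Fin n => G.Adj p.1 p.2), f p.1 p.2 := by
  refine Finset.sum_nbij' (fun p => p.swap) (fun p => p.swap) ?_ ?_ ?_ ?_ ?_
  · intro p hp; simp only [Finset.mem_filter, Finset.mem_univ, true_and] at hp ⊢
    exact hp.symm
  · intro p hp; simp only [Finset.mem_filter, Finset.mem_univ, true_and] at hp ⊢
    exact hp.symm
  · intro p _; simp
  · intro p _; simp
  · intro p _; rfl

theorem one_dim_entropy_lower_bound_simple (n : ℕ) (G : SimpleGraph (Fin n))
    [DecidableRel G.Adj] (hconn : G.Connected) (m : ℕ) (hm : m = G.edgeFinset.card) :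
    (1 / 2 : ℝ) * (Real.logb 2 m - 1)
      ≤ -∑ v, ((G.degree v : ℝ) / (2 * m)) * Real.logb 2 ((G.degree v : ℝ) / (2 * m)) := by
  classical
  have hdsum : ∑ v, G.degree v = 2 * m := by
    rw [hm]; exact G.sum_degrees_eq_twice_card_edges
  rcases Nat.eq_zero_or_pos m with hm0 | hmpos
  · subst hm0
    have hdeg : ∀ v, G.degree v = 0 := by
      intro v
      have := (by simpa using hdsum : ∀ i : Fin n, G.degree i = 0) v
      exact this
    simp only [hdeg, Nat.cast_zero, zero_div, zero_mul, Finset.sum_const_zero, neg_zero,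
      Real.logb_zero]
    norm_num
  -- main case
  have hmR : (0:ℝ) < m := by exact_mod_cast hmpos
  have h2m : (0:ℝ) < 2 * m := by linarith
  have hlog2 : (0:ℝ) < Real.log 2 := Real.log_pos (by norm_num)
  have hdpos : ∀ v, 0 < G.degree v := by
    intro v
    rw [SimpleGraph.degree_pos_iff_exists_adj]
    obtain ⟨e, he⟩ : G.edgeFinset.Nonempty := by
      rw [← Finset.card_pos, ← hm]; exact hmpos
    induction e with
    | h a b =>
      rw [SimpleGraph.mem_edgeFinset, SimpleGraph.mem_edgeSet] at he
      by_cases hva : v = a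
      · exact ⟨b, hva ▸ he⟩
      · obtain ⟨p⟩ := hconn.preconnected v a
        obtain ⟨u, hadj, _, _⟩ := SimpleGraph.Walk.not_nil_iff.mp
          (SimpleGraph.Walk.not_nil_of_ne (p := p) hva)
        exact ⟨u, hadj⟩
  have hdRsum : ∑ v, (G.degree v : ℝ) = 2 * m := by exact_mod_cast hdsum
  set S : ℝ := ∑ v, (G.degree v : ℝ) * Real.log (G.degree v) with hS
  set P : Finset (Fin n × Fin n) :=
    Finset.univ.filter (fun p : Fin n × Fin n => G.Adj p.1 p.2) with hP
  have hPcard : (P.card : ℝ) = 2 * m := by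
    have h1 : ∑ p ∈ P, (1:ℕ) = ∑ a, ∑ b ∈ G.neighborFinset a, (1:ℕ) :=
      adjPairSum G (fun _ _ => 1)
    simp only [Finset.sum_const, smul_eq_mul, mul_one] at h1
    have : P.card = 2 * m := by
      rw [h1]; simpa [SimpleGraph.card_neighborFinset_eq_degree] using hdsum
    exact_mod_cast this
  -- Jensen
  have hw : ∑ _p ∈ P, (1 / (2*(m:ℝ))) = 1 := by
    rw [Finset.sum_const, nsmul_eq_mul, hPcard]; field_simp
  have jensen := (strictConcaveOn_log_Ioi.concaveOn).le_map_sum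
    (t := P) (w := fun _ => 1 / (2*(m:ℝ)))
    (p := fun p => (G.degree p.1 : ℝ) * (G.degree p.2 : ℝ))
    (fun _ _ => by positivity) hw
    (fun p _ => by
      have h1 := hdpos p.1; have h2 := hdpos p.2
      have : (0:ℝ) < (G.degree p.1 : ℝ) * (G.degree p.2 : ℝ) := by positivity
      exact this)
  simp only [smul_eq_mul] at jensen
  -- LHS of jensen equals S / m
  have hlhs : ∑ p ∈ P, (1 / (2*(m:ℝ))) * Real.log ((G.degree p.1 : ℝ) * (G.degree p.2 : ℝ))
      = S / m := by
    have hsplit : ∀ p : Fin n × Fin n,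
        Real.log ((G.degree p.1 : ℝ) * (G.degree p.2 : ℝ))
          = Real.log (G.degree p.1) + Real.log (G.degree p.2) := by
      intro p
      exact Real.log_mul (by exact_mod_cast (hdpos p.1).ne') (by exact_mod_cast (hdpos p.2).ne')
    calc ∑ p ∈ P, (1 / (2*(m:ℝ))) * Real.log ((G.degree p.1 : ℝ) * (G.degree p.2 : ℝ))
        = (1 / (2*(m:ℝ))) * ∑ p ∈ P,
            (Real.log (G.degree p.1) + Real.log (G.degree p.2)) := by
          rw [Finset.mul_sum]; exact Finset.sum_congr rfl fun p _ => by rw [hsplit p]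
      _ = (1 / (2*(m:ℝ))) * (2 * S) := by
          congr 1
          rw [Finset.sum_add_distrib]
          have e1 : ∑ p ∈ P, Real.log (G.degree p.1)
              = ∑ a, ∑ b ∈ G.neighborFinset a, Real.log (G.degree a) :=
            adjPairSum G (fun a _ => Real.log (G.degree a))
          have e2 : ∑ p ∈ P, Real.log (G.degree p.2)
              = ∑ p ∈ P, Real.log (G.degree p.1) :=
            adjPairSwap G (fun a _ => Real.log (G.degree a))
          have e3 : ∑ a, ∑ _b ∈ G.neighborFinset a, Real.log (G.degree a) = S := by
            refine Finset.sum_congr rfl fun a _ => ?_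
            rw [Finset.sum_const, nsmul_eq_mul, SimpleGraph.card_neighborFinset_eq_degree]
          rw [e2, e1, e3]; ring
      _ = S / m := by field_simp
  rw [hlhs] at jensen
  -- RHS of jensen is at most log (2m)
  have hrhs : ∑ p ∈ P, (1 / (2*(m:ℝ))) * ((G.degree p.1 : ℝ) * (G.degree p.2 : ℝ))
      ≤ 2 * m := by
    have e1 : ∑ p ∈ P, ((G.degree p.1 : ℝ) * (G.degree p.2 : ℝ))
        = ∑ a, ∑ b ∈ G.neighborFinset a, ((G.degree a : ℝ) * (G.degree b : ℝ)) :=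
      adjPairSum G (fun a b => (G.degree a : ℝ) * (G.degree b : ℝ))
    have e2 : ∑ a, ∑ b ∈ G.neighborFinset a, ((G.degree a : ℝ) * (G.degree b : ℝ))
        ≤ ∑ a : Fin n, (G.degree a : ℝ) * (2 * m) := by
      refine Finset.sum_le_sum fun a _ => ?_
      rw [← Finset.mul_sum]
      refine mul_le_mul_of_nonneg_left ?_ (by positivity)
      calc ∑ b ∈ G.neighborFinset a, (G.degree b : ℝ)
          ≤ ∑ b : Fin n, (G.degree b : ℝ) :=
            Finset.sum_le_sum_of_subset_of_nonneg (Finset.subset_univ _)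
              (fun _ _ _ => by positivity)
        _ = 2 * m := hdRsum
    have e3 : ∑ a : Fin n, (G.degree a : ℝ) * (2 * m) = (2*m) * (2*m) := by
      rw [← Finset.sum_mul, hdRsum]
    calc ∑ p ∈ P, (1 / (2*(m:ℝ))) * ((G.degree p.1 : ℝ) * (G.degree p.2 : ℝ))
        = (1 / (2*(m:ℝ))) * ∑ p ∈ P, ((G.degree p.1 : ℝ) * (G.degree p.2 : ℝ)) := by
          rw [Finset.mul_sum]
      _ ≤ (1 / (2*(m:ℝ))) * ((2*m) * (2*m)) := by
          refine mul_le_mul_of_nonneg_left ?_ (by positivity)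
          rw [e1]; exact e2.trans (le_of_eq e3)
      _ = 2 * m := by field_simp
  have key : S ≤ m * Real.log (2 * m) := by
    have hPne : P.Nonempty := by
      rw [← Finset.card_pos]
      rcases Nat.eq_zero_or_pos P.card with h | h
      · rw [h] at hPcard; push_cast at hPcard; linarith
      · exact h
    have hpos : (0:ℝ) < ∑ p ∈ P, (1 / (2*(m:ℝ))) * ((G.degree p.1 : ℝ) * (G.degree p.2 : ℝ)) := by
      refine Finset.sum_pos (fun p _ => ?_) hPne
      have h1 := hdpos p.1; have h2 := hdpos p.2
      positivity
    have h1 : S / m ≤ Real.log (2 * m) :=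
      jensen.trans (Real.log_le_log hpos hrhs)
    have := (div_le_iff₀ hmR).mp h1
    linarith
  -- rewrite the entropy sum
  have hterm : ∀ v : Fin n, ((G.degree v : ℝ) / (2 * m)) * Real.logb 2 ((G.degree v : ℝ) / (2 * m))
      = ((G.degree v : ℝ) * Real.log (G.degree v)
          - (G.degree v : ℝ) * Real.log (2 * m)) / ((2 * m) * Real.log 2) := by
    intro v
    have hd : (0:ℝ) < (G.degree v : ℝ) := by exact_mod_cast hdpos v
    rw [Real.logb, Real.log_div hd.ne' h2m.ne']
    field_simp
  have hsum' : ∑ v, ((G.degree v : ℝ) / (2 * m)) * Real.logb 2 ((G.degree v : ℝ) / (2 * m))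
      = (S - (2 * m) * Real.log (2 * m)) / ((2 * m) * Real.log 2) := by
    rw [Finset.sum_congr rfl (fun v _ => hterm v), ← Finset.sum_div]
    congr 1
    rw [Finset.sum_sub_distrib, ← Finset.sum_mul, hdRsum]
  have hlogm : Real.log (2 * m) = Real.log 2 + Real.log m :=
    Real.log_mul (by norm_num) hmR.ne'
  have hexp : (1 / 2 : ℝ) * (Real.log m / Real.log 2 - 1) * (2 * m * Real.log 2)
      = m * Real.log m - m * Real.log 2 := by
    field_simp
  rw [hsum', ← neg_div, neg_sub, Real.logb, le_div_iff₀ (by positivity), hexp, hlogm]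
  rw [hlogm] at key
  nlinarith [mul_nonneg hmR.le hlog2.le]
end
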